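/- (Weak Agreement for Crusader Agreement.) Under the Crusader Agreement hypotheses, for all v, v' ∈ {v0, v1}: if Someone output_v = T and Someone output_{v'} = T, then v = v'. -/
import Mathlib


/-- The three truth values, encoded as `Fin 3` with `0 = F`, `1 = B`, `2 = T`. -/
abbrev TV : Type := Fin 3

/-- false -/ def tF : TV := 0
/-- both/byzantine -/ def tB : TV := 1
/-- true -/ def tT : TV := 2

/-- Negation on `TV`: `neg F = T`, `neg B = B`, `neg T = F`. -/
def tneg (x : TV) : TV := ⟨2 - x.val, by omega⟩

/-- A semitopology: a collection of subsets containing the whole set and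
closed under arbitrary unions. -/
structure Semitopology (P : Type*) where
  opens : Set (Set P)
  univ_mem : Set.univ ∈ opens
  sUnion_mem : ∀ S : Set (Set P), S ⊆ opens → ⋃₀ S ∈ opens

namespace Semitopology

variable {P : Type*}

noncomputable def Everyone (f : P → TV) : TV := ⨅ p, f p

noncomputable def Someone (f : P → TV) : TV := ⨆ p, f p

noncomputable def Quorum (S : Semitopology P) (f : P → TV) : TV :=
  ⨆ O ∈ {O | O ∈ S.opens ∧ O.Nonempty}, ⨅ p ∈ O, f p

noncomputable def Contraquorum (S : Semitopology P) (f : P → TV) : TV :=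
  ⨅ O ∈ {O | O ∈ S.opens ∧ O.Nonempty}, ⨆ p ∈ O, f p

/-- A semitopology is 3-twined when any three nonempty open sets have
nonempty intersection. -/
def ThreeTwined (S : Semitopology P) : Prop :=
  ∀ O₁ O₂ O₃ : Set P, O₁ ∈ S.opens → O₂ ∈ S.opens → O₃ ∈ S.opens →
    O₁.Nonempty → O₂.Nonempty → O₃.Nonempty → (O₁ ∩ O₂ ∩ O₃).Nonempty

end Semitopology

open Semitopology

/-- The three-element value set for Crusader Agreement. -/
inductive CVal : Type
  | v0 | vhalf | v1
deriving DecidableEq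

/-- Exclusive-or on `TV`: `B` if either argument is `B`; otherwise `T` if the
arguments differ and `F` if they agree. -/
def txor (x y : TV) : TV := if x = tB ∨ y = tB then tB else if x = y then tF else tT


lemma tv_sup_eq_top {ι : Sort*} (f : ι → TV) (h : iSup f = tT) : ∃ i, f i = tT := by
  by_contra hc
  push_neg at hc
  have hle : ∀ i, f i ≤ tB := by
    intro i
    have h1 : (f i).val ≠ 2 := fun h' => hc i (Fin.ext h')
    have h2 := (f i).isLt
    show (f i).val ≤ (tB).val
    simp only [tB, Fin.val_one]
    omega
  have : iSup f ≤ tB := iSup_le hle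
  rw [h] at this
  exact absurd this (by decide)

lemma tv_le_sup {ι : Sort*} (f : ι → TV) (h : tB ≤ iSup f) : ∃ i, tB ≤ f i := by
  by_contra hc
  push_neg at hc
  have hle : ∀ i, f i ≤ tF := by
    intro i
    have h1 : ¬ ((tB).val ≤ (f i).val) := fun h' => absurd h' (by exact_mod_cast not_le.mpr (hc i))
    show (f i).val ≤ (tF).val
    simp only [tB, tF, Fin.val_one, Fin.val_zero] at *
    omega
  have : iSup f ≤ tF := iSup_le hle
  have := le_trans h this
  exact absurd this (by decide)

lemma tv_eq_top (x : TV) (h1 : tB ≤ x) (h2 : x ≠ tB) : x = tT := by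
  have := x.isLt
  have hv : (tB).val ≤ x.val := h1
  have hne : x.val ≠ (tB).val := fun h => h2 (Fin.ext h)
  exact Fin.ext (by simp only [tB, tT, Fin.val_one, Fin.val_two] at *; omega)

theorem crusader_weak_agreement {P : Type*} (S : Semitopology P)
    (input echo1 echo2 output : P → CVal → TV)
    (h3t : S.ThreeTwined)
    (hEcho1Q : ∀ p v, echo1 p v = tT → Someone (fun q => input q v) = tT)
    (hEcho2Q : ∀ p v, echo2 p v = tT → tB ≤ S.Quorum (fun q => echo1 q v))
    (hOutputQ0 : ∀ p, output p CVal.v0 = tT → tB ≤ S.Quorum (fun q => echo2 q CVal.v0))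
    (hOutputQ1 : ∀ p, output p CVal.v1 = tT → tB ≤ S.Quorum (fun q => echo2 q CVal.v1))
    (hOutputQ' : ∀ p, output p CVal.vhalf = tT →
        tB ≤ S.Quorum (fun q => echo1 q CVal.v0) ∧ tB ≤ S.Quorum (fun q => echo1 q CVal.v1))
    (hCorrect : ∃ O ∈ S.opens, O.Nonempty ∧ ∀ q ∈ O, ∀ v : CVal,
        input q v ≠ tB ∧ echo1 q v ≠ tB ∧ echo2 q v ≠ tB ∧ output q v ≠ tB)
    (hCorrectInput : ∀ p, (∀ v : CVal, input p v ≠ tB) ∨ (∀ v : CVal, input p v = tB))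
    (hCorrectEcho1 : ∀ p, (∀ v : CVal, echo1 p v ≠ tB) ∨ (∀ v : CVal, echo1 p v = tB))
    (hCorrectEcho2 : ∀ p, (∀ v : CVal, echo2 p v ≠ tB) ∨ (∀ v : CVal, echo2 p v = tB))
    (hCorrectOutput : ∀ p, (∀ v : CVal, output p v ≠ tB) ∨ (∀ v : CVal, output p v = tB))
    (hInput : ∀ p, tB ≤ txor (input p CVal.v0) (input p CVal.v1) ⊓ tneg (input p CVal.vhalf))
    (hEcho201 : ∀ p (v v' : CVal), echo2 p v = tT → echo2 p v' = tT → v = v')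
    (hEcho1B : ∀ p v, (input p v = tT ∨ S.Contraquorum (fun q => echo1 q v) = tT) →
        tB ≤ echo1 p v)
    (hEcho2B : ∀ p, (∃ v'' : CVal, S.Quorum (fun q => echo1 q v'') = tT) →
        tB ≤ ⨆ v'' : CVal, echo2 p v'')
    (hOutputB : ∀ p v, S.Quorum (fun q => echo2 q v) = tT → tB ≤ output p v)
    (hOutputB' : ∀ p, S.Quorum (fun q => echo1 q CVal.v0) = tT ∧
        S.Quorum (fun q => echo1 q CVal.v1) = tT → tB ≤ output p CVal.vhalf) :
    ∀ v v' : CVal, (v = CVal.v0 ∨ v = CVal.v1) → (v' = CVal.v0 ∨ v' = CVal.v1) →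
      Someone (fun q => output q v) = tT → Someone (fun q => output q v') = tT →
      v = v' := by
  intro v v' hv hv' hs hs'
  -- turn Someone = tT into witnesses
  obtain ⟨p, hp⟩ := tv_sup_eq_top _ hs
  obtain ⟨p', hp'⟩ := tv_sup_eq_top _ hs'
  -- get quorum bounds for echo2 at v and v'
  have hq : tB ≤ S.Quorum (fun q => echo2 q v) := by
    rcases hv with h | h <;> subst h
    · exact hOutputQ0 p hp
    · exact hOutputQ1 p hp
  have hq' : tB ≤ S.Quorum (fun q => echo2 q v') := by
    rcases hv' with h | h <;> subst h
    · exact hOutputQ0 p' hp'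
    · exact hOutputQ1 p' hp'
  obtain ⟨O1, hO1⟩ := tv_le_sup _ hq
  obtain ⟨hO1mem, hO1inf⟩ := tv_le_sup _ hO1
  obtain ⟨O2, hO2⟩ := tv_le_sup _ hq'
  obtain ⟨hO2mem, hO2inf⟩ := tv_le_sup _ hO2
  obtain ⟨O3, hO3open, hO3ne, hO3corr⟩ := hCorrect
  obtain ⟨q, hq1, hq3⟩ := h3t O1 O2 O3 hO1mem.1 hO2mem.1 hO3open hO1mem.2 hO2mem.2 hO3ne
  obtain ⟨hq1, hq2⟩ := hq1
  have h1 : tB ≤ echo2 q v := le_trans hO1inf (iInf₂_le q hq1)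
  have h2 : tB ≤ echo2 q v' := le_trans hO2inf (iInf₂_le q hq2)
  have hcorr := hO3corr q hq3
  have e1 : echo2 q v = tT := tv_eq_top _ h1 (hcorr v).2.2.1
  have e2 : echo2 q v' = tT := tv_eq_top _ h2 (hcorr v').2.2.1
  exact hEcho201 q v v' e1 e2
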